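/- For every natural number g ≥ 1, define in ℚ(u,v): A = [(1+u)^g(1+v)^g(1+u²v)^g(1+uv²)^g − (uv)^{g+1}(1+u)^{2g}(1+v)^{2g}]/((1−u²v²)(1−uv)²); T₁ = (1+u)^g(1+v)^g/((1−uv)(1−u²v²)); T₂ = (1−u^g v^g)(1+u)^g(1+v)^g/(1−uv)²; T₃ = [ (1/2)(1+u)^{2g}(1+v)^{2g}(1+uv) + (1/2)(1−u²)^g(1−v²)^g(1−uv) − (uv)^g(1+u)^g(1+v)^g ]/((1−uv)(1−u²v²)); T₄ = ((uv)^{g−1} − (uv)^{2g−2})·[(1+u)^{2g}(1+v)^{2g} − (uv)^g(1+u)^g(1+v)^g]/(1−uv)². Then (1−uv)·[ A − (uv)^{3g}·T₁ − (uv)^{2g−1}·T₂ − (uv)^{2g−2}·T₃ − T₄ ] = [1/(2(1−uv)(1−u²v²))]·[ 2(1+u)^g(1+v)^g(1+u²v)^g(1+uv²)^g − (uv)^{g−1}(1+u)^{2g}(1+v)^{2g}(2 − (uv)^{g−1} + (uv)^{g+1}) − (uv)^{2g−2}(1−u²)^g(1−v²)^g(1−uv)² ]. -/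
import Mathlib


/- STATEMENT 9: the computational core of the main theorem: subtracting the four
unstable-strata contributions from HP_{GL(p)}(𝓡(2,d)^{ss}) and multiplying by
(1-uv) yields the Hodge–Poincaré polynomial of 𝓜^s_{(0)}(2,d). -/

noncomputable section
open MvPolynomial

abbrev K : Type := FractionRing (MvPolynomial (Fin 2) ℚ)

def u : K := algebraMap (MvPolynomial (Fin 2) ℚ) K (X 0)
def v : K := algebraMap (MvPolynomial (Fin 2) ℚ) K (X 1)

lemma poly_ne (p : MvPolynomial (Fin 2) ℚ) (hp : p ≠ 0) :
    algebraMap (MvPolynomial (Fin 2) ℚ) K p ≠ 0 :=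
  (map_ne_zero_iff _ (IsFractionRing.injective _ _)).mpr hp

lemma h1 : (1 : K) - u * v ≠ 0 := by
  have : (1 : K) - u * v = algebraMap (MvPolynomial (Fin 2) ℚ) K (1 - X 0 * X 1) := by
    simp [u, v]
  rw [this]
  apply poly_ne
  intro h
  have := congrArg (eval 0) h
  simp at this

lemma h2 : (1 : K) + u * v ≠ 0 := by
  have : (1 : K) + u * v = algebraMap (MvPolynomial (Fin 2) ℚ) K (1 + X 0 * X 1) := by
    simp [u, v]
  rw [this]
  apply poly_ne
  intro h
  have := congrArg (eval 0) h
  simp at this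

lemma h3 : (1 : K) - u ^ 2 * v ^ 2 ≠ 0 := by
  have : (1 : K) - u ^ 2 * v ^ 2 = (1 - u * v) * (1 + u * v) := by ring
  rw [this]
  exact mul_ne_zero h1 h2

lemma frac (c n d m D2 : K) (hd : d ≠ 0) (hD : D2 ≠ 0) (h : c * n * D2 = m * d) :
    c * (n / d) = m / D2 := by
  field_simp
  linear_combination h

lemma frac2 (c p n d m D2 : K) (hd : d ≠ 0) (hD : D2 ≠ 0) (h : c * p * n * D2 = m * d) :
    c * (p * (n / d)) = m / D2 := by
  field_simp
  linear_combination h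

set_option maxHeartbeats 1000000 in
theorem main_theorem_identity (g : ℕ) (hg : 1 ≤ g) :
    (1 - u * v) *
      ((((1 + u) ^ g * (1 + v) ^ g * (1 + u ^ 2 * v) ^ g * (1 + u * v ^ 2) ^ g
            - (u * v) ^ (g + 1) * (1 + u) ^ (2 * g) * (1 + v) ^ (2 * g))
          / ((1 - u ^ 2 * v ^ 2) * (1 - u * v) ^ 2))
        - (u * v) ^ (3 * g) *
            ((1 + u) ^ g * (1 + v) ^ g / ((1 - u * v) * (1 - u ^ 2 * v ^ 2)))
        - (u * v) ^ (2 * g - 1) *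
            ((1 - u ^ g * v ^ g) * (1 + u) ^ g * (1 + v) ^ g / (1 - u * v) ^ 2)
        - (u * v) ^ (2 * g - 2) *
            (((1/2 : K) * (1 + u) ^ (2 * g) * (1 + v) ^ (2 * g) * (1 + u * v)
                + (1/2 : K) * (1 - u ^ 2) ^ g * (1 - v ^ 2) ^ g * (1 - u * v)
                - (u * v) ^ g * (1 + u) ^ g * (1 + v) ^ g)
              / ((1 - u * v) * (1 - u ^ 2 * v ^ 2)))
        - ((u * v) ^ (g - 1) - (u * v) ^ (2 * g - 2)) *
            (((1 + u) ^ (2 * g) * (1 + v) ^ (2 * g)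
                - (u * v) ^ g * (1 + u) ^ g * (1 + v) ^ g) / (1 - u * v) ^ 2))
    = (1 / (2 * (1 - u * v) * (1 - u ^ 2 * v ^ 2))) *
        (2 * (1 + u) ^ g * (1 + v) ^ g * (1 + u ^ 2 * v) ^ g * (1 + u * v ^ 2) ^ g
          - (u * v) ^ (g - 1) * (1 + u) ^ (2 * g) * (1 + v) ^ (2 * g)
              * (2 - (u * v) ^ (g - 1) + (u * v) ^ (g + 1))
          - (u * v) ^ (2 * g - 2) * (1 - u ^ 2) ^ g * (1 - v ^ 2) ^ g
              * (1 - u * v) ^ 2) := by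
  obtain ⟨k, rfl⟩ : ∃ k, g = k + 1 := ⟨g - 1, (Nat.succ_pred_eq_of_pos hg).symm⟩
  have e3 : 2 * (k + 1) - 1 = 2 * k + 1 := by omega
  have e4 : 2 * (k + 1) - 2 = 2 * k := by omega
  have e5 : k + 1 - 1 = k := by omega
  have e1 : 2 * (k + 1) = 2 * k + 2 := by ring
  have e2 : 3 * (k + 1) = 3 * k + 3 := by ring
  rw [e3, e4, e5, e1, e2]
  have hd2 : ((1:K) - u * v) ^ 2 ≠ 0 := pow_ne_zero _ h1
  have hdm : ((1:K) - u * v) * (1 - u ^ 2 * v ^ 2) ≠ 0 := mul_ne_zero h1 h3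
  have hdA : ((1:K) - u ^ 2 * v ^ 2) * (1 - u * v) ^ 2 ≠ 0 := mul_ne_zero h3 hd2
  have hD2 : (2:K) * (1 - u * v) * (1 - u ^ 2 * v ^ 2) ≠ 0 := by
    rw [mul_assoc]
    exact mul_ne_zero two_ne_zero hdm
  set D2 : K := 2 * (1 - u * v) * (1 - u ^ 2 * v ^ 2) with hD2def
  rw [mul_sub, mul_sub, mul_sub, mul_sub]
  have eA : (1 - u * v) *
      (((1 + u) ^ (k+1) * (1 + v) ^ (k+1) * (1 + u ^ 2 * v) ^ (k+1) * (1 + u * v ^ 2) ^ (k+1)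
            - (u * v) ^ (k + 1 + 1) * (1 + u) ^ (2*k+2) * (1 + v) ^ (2*k+2))
          / ((1 - u ^ 2 * v ^ 2) * (1 - u * v) ^ 2))
      = (2 * ((1 + u) ^ (k+1) * (1 + v) ^ (k+1) * (1 + u ^ 2 * v) ^ (k+1) * (1 + u * v ^ 2) ^ (k+1)
            - (u * v) ^ (k + 1 + 1) * (1 + u) ^ (2*k+2) * (1 + v) ^ (2*k+2))) / D2 := by
    apply frac _ _ _ _ _ hdA hD2
    rw [hD2def]; ring
  have eT1 : (1 - u * v) * ((u * v) ^ (3*k+3) *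
      ((1 + u) ^ (k+1) * (1 + v) ^ (k+1) / ((1 - u * v) * (1 - u ^ 2 * v ^ 2))))
      = (2 * (1 - u * v) * (u * v) ^ (3*k+3) * (1 + u) ^ (k+1) * (1 + v) ^ (k+1)) / D2 := by
    apply frac2 _ _ _ _ _ _ hdm hD2
    rw [hD2def]; ring
  have eT2 : (1 - u * v) * ((u * v) ^ (2*k+1) *
      ((1 - u ^ (k+1) * v ^ (k+1)) * (1 + u) ^ (k+1) * (1 + v) ^ (k+1) / (1 - u * v) ^ 2))
      = (2 * (u * v) ^ (2*k+1) * (1 - u ^ (k+1) * v ^ (k+1)) * (1 + u) ^ (k+1) * (1 + v) ^ (k+1)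
          * (1 - u ^ 2 * v ^ 2)) / D2 := by
    apply frac2 _ _ _ _ _ _ hd2 hD2
    rw [hD2def]; ring
  have eT3 : (1 - u * v) * ((u * v) ^ (2*k) *
      (((1/2 : K) * (1 + u) ^ (2*k+2) * (1 + v) ^ (2*k+2) * (1 + u * v)
          + (1/2 : K) * (1 - u ^ 2) ^ (k+1) * (1 - v ^ 2) ^ (k+1) * (1 - u * v)
          - (u * v) ^ (k+1) * (1 + u) ^ (k+1) * (1 + v) ^ (k+1))
        / ((1 - u * v) * (1 - u ^ 2 * v ^ 2))))
      = ((1 - u * v) * (u * v) ^ (2*k) *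
          ((1 + u) ^ (2*k+2) * (1 + v) ^ (2*k+2) * (1 + u * v)
            + (1 - u ^ 2) ^ (k+1) * (1 - v ^ 2) ^ (k+1) * (1 - u * v)
            - 2 * (u * v) ^ (k+1) * (1 + u) ^ (k+1) * (1 + v) ^ (k+1))) / D2 := by
    apply frac2 _ _ _ _ _ _ hdm hD2
    rw [hD2def]; ring
  have eT4 : (1 - u * v) * (((u * v) ^ k - (u * v) ^ (2*k)) *
      (((1 + u) ^ (2*k+2) * (1 + v) ^ (2*k+2)
          - (u * v) ^ (k+1) * (1 + u) ^ (k+1) * (1 + v) ^ (k+1)) / (1 - u * v) ^ 2))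
      = (2 * ((u * v) ^ k - (u * v) ^ (2*k)) *
          ((1 + u) ^ (2*k+2) * (1 + v) ^ (2*k+2)
            - (u * v) ^ (k+1) * (1 + u) ^ (k+1) * (1 + v) ^ (k+1)) * (1 - u ^ 2 * v ^ 2)) / D2 := by
    apply frac2 _ _ _ _ _ _ hd2 hD2
    rw [hD2def]; ring
  have eR : (1 / D2) *
      (2 * (1 + u) ^ (k+1) * (1 + v) ^ (k+1) * (1 + u ^ 2 * v) ^ (k+1) * (1 + u * v ^ 2) ^ (k+1)
        - (u * v) ^ k * (1 + u) ^ (2*k+2) * (1 + v) ^ (2*k+2)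
            * (2 - (u * v) ^ k + (u * v) ^ (k + 1 + 1))
        - (u * v) ^ (2*k) * (1 - u ^ 2) ^ (k+1) * (1 - v ^ 2) ^ (k+1) * (1 - u * v) ^ 2)
      = (2 * (1 + u) ^ (k+1) * (1 + v) ^ (k+1) * (1 + u ^ 2 * v) ^ (k+1) * (1 + u * v ^ 2) ^ (k+1)
        - (u * v) ^ k * (1 + u) ^ (2*k+2) * (1 + v) ^ (2*k+2)
            * (2 - (u * v) ^ k + (u * v) ^ (k + 1 + 1))
        - (u * v) ^ (2*k) * (1 - u ^ 2) ^ (k+1) * (1 - v ^ 2) ^ (k+1) * (1 - u * v) ^ 2) / D2 := by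
    rw [one_div, inv_mul_eq_div]
  rw [eA, eT1, eT2, eT3, eT4, eR, div_sub_div_same, div_sub_div_same, div_sub_div_same,
    div_sub_div_same, div_eq_div_iff hD2 hD2]
  ring


end
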